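/- arXiv:2102.07570 — 5 statements merged into one kernel-verified Lean document; each statement's English description precedes it below -/
import Mathlib

section
/- Fix an integer m ≥ 1 and a real δ > −m, and consider the preferential attachment model without self-loops with parameters m and δ. Then for all s ≥ 2, all i ∈ {0,…,m−1}, and all j ≥ m, almost surely E[N_j(s,i+1) | F_{s,i}] = N_j(s,i)·(1 − (j+δ)/(s(2m+δ) − 2m + i)) + 1{j ≠ m}·((j−1+δ)/(s(2m+δ) − 2m + i))·N_{j−1}(s,i) + 1{j = m}·1{i+1 = m}. -/
open MeasureTheory Filter Finset

noncomputable section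

/-- The coefficients `b_j^{(k)} = (-1)^{k-j} Γ(k+δ)/((k-j)! Γ(j+δ))`, with `b_j^{(k)} = 0`
for `j > k`. -/
def bcoef (δ : ℝ) (j k : ℕ) : ℝ :=
  if j ≤ k then
    (-1 : ℝ)^(k-j) * Real.Gamma ((k:ℝ)+δ) / ((Nat.factorial (k-j) : ℝ) * Real.Gamma ((j:ℝ)+δ))
  else 0

/-- The limiting degree distribution `p_k`. -/
def pk (m : ℕ) (δ : ℝ) (k : ℕ) : ℝ :=
  (2 + δ/m) * Real.Gamma ((k:ℝ)+δ) * Real.Gamma ((m:ℝ)+2+δ+δ/m) /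
    (Real.Gamma ((m:ℝ)+δ) * Real.Gamma ((k:ℝ)+3+δ+δ/m))

/-- The normalizing coefficients `a_{s,i}^{(k)}`. -/
def acoef (m : ℕ) (δ : ℝ) (k s i : ℕ) : ℝ :=
  (∏ t ∈ Finset.Icc (k-m+1) (s-1), ∏ r ∈ Finset.range m,
      (1 - ((k:ℝ)+δ)/((t:ℝ)*(2*m+δ) - 2*m + r)))⁻¹ *
  (∏ r ∈ Finset.range i, (1 - ((k:ℝ)+δ)/((s:ℝ)*(2*m+δ) - 2*m + r)))⁻¹

/-- The preferential attachment model without self-loops, with parameters `m ≥ 1` and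
`δ > -m`.  `PA_1` consists of vertices `0, 1` joined by `m` edges; at each step `s ≥ 2` a
new vertex `s` attaches `m` edges one by one, choosing the endpoint of the `i`-th edge
with probability proportional to degree plus `δ`.  `N k s i` is the number of vertices of
degree `k` after the `i`-th edge at time `s` (excluding vertex `s`), `D s i` the degree of
the vertex receiving the `i`-th edge at time `s`, and `F s i` the σ-algebra generated by
the construction up to that point. -/
structure PAModel (m : ℕ) (δ : ℝ) (Ω : Type) [MeasurableSpace Ω] where
  μ : Measure Ω
  isProb : IsProbabilityMeasure μ
  F : ℕ → ℕ → MeasurableSpace Ω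
  F_le : ∀ s i, F s i ≤ ‹MeasurableSpace Ω›
  F_mono : ∀ s i s' i', s < s' ∨ (s = s' ∧ i ≤ i') → F s i ≤ F s' i'
  N : ℕ → ℕ → ℕ → Ω → ℝ
  D : ℕ → ℕ → Ω → ℕ
  N_boundary : ∀ k s, N k (s+1) 0 = N k s m
  N_init : ∀ k, N k 2 0 = fun _ => if k = m then 2 else 0
  N_adapted : ∀ k s i, Measurable[F s i] (N k s i)
  D_adapted : ∀ s i, 1 ≤ i → Measurable[F s i] (D s i)
  N_integrable : ∀ k s i, Integrable (N k s i) μ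
  N_rec : ∀ k s i, 2 ≤ s → i < m → 1 ≤ k → ∀ ω,
    N k s (i+1) ω = N k s i ω - (if D s (i+1) ω = k then 1 else 0)
      + (if k = m ∧ i + 1 = m then 1 else 0)
      + (if k ≠ m ∧ D s (i+1) ω = k - 1 then 1 else 0)
  attach_law : ∀ s i k, 2 ≤ s → 1 ≤ i → i ≤ m →
    MeasureTheory.condExp (F s (i-1)) μ
        (Set.indicator {ω | D s i ω = k} (fun _ => (1:ℝ)))
      =ᵐ[μ] fun ω => ((k:ℝ) + δ) * N k s (i-1) ω / ((s:ℝ)*(2*m+δ) - 2*m + i - 1)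

namespace PAModel

variable {m : ℕ} {δ : ℝ} {Ω : Type} [MeasurableSpace Ω] (P : PAModel m δ Ω)

instance : IsProbabilityMeasure P.μ := P.isProb

def attachIndicator (s i k : ℕ) : Ω → ℝ :=
  Set.indicator {ω | P.D s (i+1) ω = k} (fun _ => 1)

theorem integrable_attachIndicator (s i k : ℕ) : Integrable (P.attachIndicator s i k) P.μ :=
  (integrable_const 1).indicator <|
    (P.D_adapted s (i+1) (Nat.le_add_left 1 i)).mono (P.F_le s (i+1)) le_rfl
      (measurableSet_singleton k)

theorem condExp_attachIndicator {s i : ℕ} (hs : 2 ≤ s) (hi : i < m) (k : ℕ) :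
    P.μ[P.attachIndicator s i k | P.F s i] =ᵐ[P.μ]
      fun ω => ((k:ℝ) + δ) * P.N k s i ω / ((s:ℝ)*(2*(m:ℝ)+δ) - 2*m + i) := by
  have h := P.attach_law s (i+1) k hs (Nat.le_add_left 1 i) hi
  simpa only [attachIndicator, Nat.add_sub_cancel, Nat.cast_add, Nat.cast_one, add_sub_assoc,
    sub_self, add_zero] using h

theorem condExp_N (k s i : ℕ) : P.μ[P.N k s i | P.F s i] = P.N k s i :=
  condExp_of_stronglyMeasurable (P.F_le s i) (P.N_adapted k s i).stronglyMeasurable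
    (P.N_integrable k s i)

theorem N_succ_eq {k s i : ℕ} (hs : 2 ≤ s) (hi : i < m) (hk : 1 ≤ k) :
    P.N k s (i+1) = P.N k s i - P.attachIndicator s i k
      + (fun _ => if k = m ∧ i + 1 = m then 1 else 0)
      + (if k ≠ m then (1:ℝ) else 0) • P.attachIndicator s i (k-1) := by
  funext ω
  rw [P.N_rec k s i hs hi hk ω]
  by_cases hkm : k = m <;>
    simp [attachIndicator, Set.indicator_apply, hkm]

end PAModel

theorem condexp_degree_count_general (m : ℕ) (δ : ℝ)
    {Ω : Type} [MeasurableSpace Ω] (P : PAModel m δ Ω)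
    (s i j : ℕ) (hs : 2 ≤ s) (hi : i < m) (hj : m ≤ j) :
    MeasureTheory.condExp (P.F s i) P.μ (P.N j s (i+1)) =ᵐ[P.μ]
      fun ω => P.N j s i ω * (1 - ((j:ℝ)+δ)/((s:ℝ)*(2*(m:ℝ)+δ) - 2*m + i))
        + (if j ≠ m then 1 else 0) *
            (((j:ℝ) - 1 + δ)/((s:ℝ)*(2*(m:ℝ)+δ) - 2*m + i)) * P.N (j-1) s i ω
        + (if j = m ∧ i + 1 = m then 1 else 0) := by
  have hj1 : 1 ≤ j := by omega
  set c : ℝ := if j ≠ m then 1 else 0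
  have hN := P.N_integrable j s i
  have hA := P.integrable_attachIndicator s i
  rw [P.N_succ_eq hs hi hj1]
  filter_upwards [condExp_add ((hN.sub (hA j)).add (integrable_const _)) ((hA (j-1)).smul c) _,
    condExp_add (hN.sub (hA j)) (integrable_const _) _, condExp_sub hN (hA j) (P.F s i),
    condExp_smul c (P.attachIndicator s i (j-1)) (P.F s i),
    P.condExp_attachIndicator hs hi j, P.condExp_attachIndicator hs hi (j-1)]
    with ω h₁ h₂ h₃ h₄ h₅ h₆
  simp only [Pi.add_apply, Pi.sub_apply, Pi.smul_apply, smul_eq_mul] at h₁ h₂ h₃ h₄ ⊢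
  rw [h₁, h₂, h₃, h₄, P.condExp_N, condExp_const (P.F_le s i), h₅, h₆, Nat.cast_pred hj1]
  split_ifs <;> ring

/-- One-step conditional expectation of the degree counts:
`E[N_j(s,i+1) | F_{s,i}] = N_j(s,i)(1 - (j+δ)/(s(2m+δ)-2m+i))
  + 1_{j≠m} ((j-1+δ)/(s(2m+δ)-2m+i)) N_{j-1}(s,i) + 1_{j=m} 1_{i+1=m}`. -/
theorem condexp_degree_count (m : ℕ) (hm : 1 ≤ m) (δ : ℝ) (hδ : -(m:ℝ) < δ)
    {Ω : Type} [MeasurableSpace Ω] (P : PAModel m δ Ω)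
    (s i j : ℕ) (hs : 2 ≤ s) (hi : i < m) (hj : m ≤ j) :
    MeasureTheory.condExp (P.F s i) P.μ (P.N j s (i+1)) =ᵐ[P.μ]
      fun ω => P.N j s i ω * (1 - ((j:ℝ)+δ)/((s:ℝ)*(2*(m:ℝ)+δ) - 2*m + i))
        + (if j ≠ m then 1 else 0) *
            (((j:ℝ) - 1 + δ)/((s:ℝ)*(2*(m:ℝ)+δ) - 2*m + i)) * P.N (j-1) s i ω
        + (if j = m ∧ i + 1 = m then 1 else 0) :=
  condexp_degree_count_general m δ P s i j hs hi hj

end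
end

section
/- Fix an integer m ≥ 1, a real δ > −m, and an integer k ≥ m. For s ≥ 2, i ∈ {0,…,m−1}, set D := s(2m+δ) − 2m + i. Then the coefficients a_{s,i}^{(k)} and b_j^{(k)} satisfy: (i) for every j with m ≤ j ≤ k−1, a_{s,i+1}^{(k)}·[ b_j^{(k)}·(1 − (j+δ)/D) + b_{j+1}^{(k)}·(j+δ)/D ] = a_{s,i}^{(k)}·b_j^{(k)}; and (ii) a_{s,i+1}^{(k)}·b_k^{(k)}·(1 − (k+δ)/D) = a_{s,i}^{(k)}·b_k^{(k)}. -/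
open MeasureTheory Filter Finset

noncomputable section

/-! The ratio `a_{s,i+1}/a_{s,i}` is `(1 - (k+δ)/D)⁻¹`, and `Γ(x+1) = xΓ(x)` gives
`b_{j+1}(j+δ) = (j-k) b_j`, which collapses the mixture of `b_j` and `b_{j+1}` to
`b_j (1 - (k+δ)/D)`. -/

theorem acoef_succ_mul (m : ℕ) (δ : ℝ) (k s i : ℕ)
    (h : 1 - ((k:ℝ) + δ) / ((s:ℝ)*(2*m+δ) - 2*m + i) ≠ 0) :
    acoef m δ k s (i+1) * (1 - ((k:ℝ) + δ) / ((s:ℝ)*(2*m+δ) - 2*m + i)) = acoef m δ k s i := by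
  rw [acoef, acoef, Finset.prod_range_succ, mul_inv, ← mul_assoc, mul_assoc _ _⁻¹,
    inv_mul_cancel₀ h, mul_one]

theorem bcoef_succ_mul (δ : ℝ) (j k : ℕ) :
    bcoef δ (j+1) k * ((j:ℝ) + δ) = ((j:ℝ) - k) * bcoef δ j k := by
  rcases lt_or_ge j k with hjk | hkj
  · obtain ⟨n, rfl⟩ : ∃ n, k = j + 1 + n := ⟨k - (j + 1), by omega⟩
    rcases eq_or_ne ((j:ℝ) + δ) 0 with hj | hj
    · -- `Γ 0 = 0`, so `b_j` is a division by zero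
      simp [bcoef, hj, Real.Gamma_zero]
    have hΓ : Real.Gamma ((↑(j+1):ℝ) + δ) = ((j:ℝ) + δ) * Real.Gamma ((j:ℝ) + δ) := by
      rw [Nat.cast_succ, add_right_comm, Real.Gamma_add_one hj]
    rw [bcoef, bcoef, if_pos (by omega), if_pos (by omega), hΓ,
      show j + 1 + n - (j + 1) = n by omega, show j + 1 + n - j = n + 1 by omega,
      Nat.factorial_succ, pow_succ]
    rcases eq_or_ne (Real.Gamma ((j:ℝ) + δ)) 0 with hΓ0 | hΓ0
    · simp [hΓ0]
    have hn : (n.factorial : ℝ) ≠ 0 := by exact_mod_cast n.factorial_ne_zero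
    push_cast
    field_simp
    ring
  · rw [show bcoef δ (j+1) k = 0 from if_neg (by omega), zero_mul]
    rcases hkj.eq_or_lt with rfl | hlt
    · rw [sub_self, zero_mul]
    · rw [show bcoef δ j k = 0 from if_neg (by omega), mul_zero]

theorem bcoef_mul_one_sub_add_bcoef_succ (δ : ℝ) (j k : ℕ) (D : ℝ) :
    bcoef δ j k * (1 - ((j:ℝ) + δ) / D) + bcoef δ (j+1) k * (((j:ℝ) + δ) / D)
      = bcoef δ j k * (1 - ((k:ℝ) + δ) / D) := by
  linear_combination bcoef_succ_mul δ j k / D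

theorem acoef_bcoef_recursion_general (m : ℕ) (δ : ℝ)
    (k : ℕ) (s i : ℕ)
    (hfac' : ∀ r ∈ Finset.range (i + 1),
      (1 - ((k:ℝ) + δ) / ((s:ℝ)*(2*m+δ) - 2*m + r)) ≠ 0) :
    (∀ j : ℕ, m ≤ j → j + 1 ≤ k →
      acoef m δ k s (i+1) *
        (bcoef δ j k * (1 - ((j:ℝ) + δ) / ((s:ℝ)*(2*m+δ) - 2*m + i))
          + bcoef δ (j+1) k * (((j:ℝ) + δ) / ((s:ℝ)*(2*m+δ) - 2*m + i)))
      = acoef m δ k s i * bcoef δ j k) ∧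
    acoef m δ k s (i+1) * bcoef δ k k * (1 - ((k:ℝ) + δ) / ((s:ℝ)*(2*m+δ) - 2*m + i))
      = acoef m δ k s i * bcoef δ k k := by
  have hstep := acoef_succ_mul m δ k s i (hfac' i (Finset.self_mem_range_succ i))
  refine ⟨fun j _ _ => ?_, ?_⟩
  · rw [bcoef_mul_one_sub_add_bcoef_succ, mul_left_comm, hstep, mul_comm]
  · rw [mul_right_comm, hstep]

/-- The coefficients `a_{s,i}^{(k)}`, `b_j^{(k)}` satisfy the defining recursion
(conditions (condizioni)) whenever all the involved factors are nonzero. -/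
theorem acoef_bcoef_recursion (m : ℕ) (hm : 1 ≤ m) (δ : ℝ) (hδ : -(m:ℝ) < δ)
    (k : ℕ) (hk : m ≤ k) (s i : ℕ) (hs : 2 ≤ s) (hi : i < m)
    (hfac : ∀ t ∈ Finset.Icc (k - m + 1) (s - 1), ∀ r ∈ Finset.range m,
      (1 - ((k:ℝ) + δ) / ((t:ℝ)*(2*m+δ) - 2*m + r)) ≠ 0)
    (hfac' : ∀ r ∈ Finset.range (i + 1),
      (1 - ((k:ℝ) + δ) / ((s:ℝ)*(2*m+δ) - 2*m + r)) ≠ 0)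
    (hD : ((s:ℝ)*(2*m+δ) - 2*m + i) ≠ 0) :
    (∀ j : ℕ, m ≤ j → j + 1 ≤ k →
      acoef m δ k s (i+1) *
        (bcoef δ j k * (1 - ((j:ℝ) + δ) / ((s:ℝ)*(2*m+δ) - 2*m + i))
          + bcoef δ (j+1) k * (((j:ℝ) + δ) / ((s:ℝ)*(2*m+δ) - 2*m + i)))
      = acoef m δ k s i * bcoef δ j k) ∧
    acoef m δ k s (i+1) * bcoef δ k k * (1 - ((k:ℝ) + δ) / ((s:ℝ)*(2*m+δ) - 2*m + i))
      = acoef m δ k s i * bcoef δ k k :=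
  acoef_bcoef_recursion_general m δ k s i hfac'

end
end

section
/- Fix an integer m ≥ 1 and a real δ > −m, and define p_k := (2 + δ/m)·Γ(k+δ)·Γ(m+2+δ+δ/m) / (Γ(m+δ)·Γ(k+3+δ+δ/m)) for integers k ≥ m. Then p_k > 0 for all k ≥ m and Σ_{k=m}^{∞} p_k = 1; i.e., (p_k)_{k≥m} is a probability mass function. -/
/-! With `x = k + δ` and `s = 2 + δ/m`, the functional equation of `Γ` gives
`Γ x / Γ (x + s) - Γ (x + 1) / Γ (x + 1 + s) = s Γ x / Γ (x + s + 1)`, so `p_k` is a constant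
multiple of the increment of the positive, decreasing sequence `Γ (k + δ) / Γ (k + δ + s)`.
The series telescopes, and since `s ≥ 1` monotonicity of `Γ` on `[2, ∞)` bounds that sequence
by `1 / (k + δ)`, so the sum is the constant times the first term, which is `1`. -/

open MeasureTheory Filter Finset

noncomputable section

open Topology

namespace Real

theorem Gamma_div_Gamma_add_sub_succ {x s : ℝ} (hx : 0 < x) (hxs : 0 < x + s) :
    Gamma x / Gamma (x + s) - Gamma (x + 1) / Gamma (x + 1 + s) =
      s * Gamma x / Gamma (x + s + 1) := by
  have hG : Gamma (x + s) ≠ 0 := (Gamma_pos_of_pos hxs).ne'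
  rw [add_right_comm x 1 s, Gamma_add_one hx.ne', Gamma_add_one hxs.ne']
  field_simp
  ring

theorem Gamma_div_Gamma_add_le_inv {x s : ℝ} (hx : 1 ≤ x) (hs : 1 ≤ s) :
    Gamma x / Gamma (x + s) ≤ x⁻¹ := by
  have hGx : 0 < Gamma x := Gamma_pos_of_pos (by linarith)
  have hmono : Gamma (x + 1) ≤ Gamma (x + s) :=
    Gamma_strictMonoOn_Ici.monotoneOn (Set.mem_Ici.2 (by linarith))
      (Set.mem_Ici.2 (by linarith)) (by linarith)
  calc Gamma x / Gamma (x + s) ≤ Gamma x / Gamma (x + 1) :=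
        div_le_div_of_nonneg_left hGx.le (Gamma_pos_of_pos (by linarith)) hmono
    _ = x⁻¹ := by
        rw [Gamma_add_one (by linarith)]
        field_simp

theorem tendsto_Gamma_div_Gamma_add_atTop {s : ℝ} (hs : 1 ≤ s) :
    Tendsto (fun x => Gamma x / Gamma (x + s)) atTop (𝓝 0) := by
  refine squeeze_zero' ?_ ?_ tendsto_inv_atTop_zero
  · filter_upwards [eventually_gt_atTop 0] with x hx
    exact div_nonneg (Gamma_pos_of_pos hx).le (Gamma_pos_of_pos (by linarith)).le
  · filter_upwards [eventually_ge_atTop 1] with x hx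
    exact Gamma_div_Gamma_add_le_inv hx hs

end Real

theorem hasSum_sub_succ_of_antitone {f : ℕ → ℝ} (hf : Antitone f) {l : ℝ}
    (hl : Tendsto f atTop (𝓝 l)) : HasSum (fun n => f n - f (n + 1)) (f 0 - l) := by
  rw [hasSum_iff_tendsto_nat_of_nonneg (fun n => sub_nonneg.2 (hf n.le_succ))]
  simp only [Finset.sum_range_sub']
  exact tendsto_const_nhds.sub hl

theorem neg_one_lt_div_of_neg_lt {a b : ℝ} (hb : 0 < b) (h : -b < a) : -1 < a / b := by
  rw [lt_div_iff₀ hb]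
  linarith

section pk

variable {m : ℕ} {δ : ℝ} {k : ℕ}

theorem pk_pos (hm : 1 ≤ m) (hδ : -(m : ℝ) < δ) (hk : m ≤ k) : 0 < pk m δ k := by
  have hc := neg_one_lt_div_of_neg_lt (Nat.cast_pos.2 hm) hδ
  have hkm : (m : ℝ) ≤ k := by exact_mod_cast hk
  unfold pk
  have := Real.Gamma_pos_of_pos (show 0 < (k : ℝ) + δ by linarith)
  have := Real.Gamma_pos_of_pos (show 0 < (m : ℝ) + 2 + δ + δ / m by linarith)
  have := Real.Gamma_pos_of_pos (show 0 < (m : ℝ) + δ by linarith)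
  have := Real.Gamma_pos_of_pos (show 0 < (k : ℝ) + 3 + δ + δ / m by linarith)
  have : 0 < 2 + δ / m := by linarith
  positivity

theorem pk_eq_mul_sub (hm : 1 ≤ m) (hδ : -(m : ℝ) < δ) (hk : m ≤ k) :
    pk m δ k = Real.Gamma (m + δ + (2 + δ / m)) / Real.Gamma (m + δ) *
      (Real.Gamma (k + δ) / Real.Gamma (k + δ + (2 + δ / m)) -
        Real.Gamma (k + δ + 1) / Real.Gamma (k + δ + 1 + (2 + δ / m))) := by
  have hc := neg_one_lt_div_of_neg_lt (Nat.cast_pos.2 hm) hδ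
  have hkm : (m : ℝ) ≤ k := by exact_mod_cast hk
  rw [Real.Gamma_div_Gamma_add_sub_succ (by linarith) (by linarith), pk]
  ring_nf

end pk

/-- `(p_k)_{k ≥ m}` is a probability mass function: each `p_k` is positive and they sum
to one. -/
theorem pk_is_pmf (m : ℕ) (hm : 1 ≤ m) (δ : ℝ) (hδ : -(m:ℝ) < δ) :
    (∀ k : ℕ, m ≤ k → 0 < pk m δ k) ∧
    HasSum (fun n : ℕ => pk m δ (m + n)) 1 := by
  refine ⟨fun k hk => pk_pos hm hδ hk, ?_⟩
  have hs : 1 ≤ 2 + δ / m := by linarith [neg_one_lt_div_of_neg_lt (Nat.cast_pos.2 hm) hδ]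
  set g : ℕ → ℝ := fun n =>
    Real.Gamma ((m + n : ℕ) + δ) / Real.Gamma ((m + n : ℕ) + δ + (2 + δ / m))
  have hg_pos : ∀ n, 0 < g n := fun n => by
    have : (m : ℝ) ≤ (m + n : ℕ) := by exact_mod_cast Nat.le_add_right m n
    exact div_pos (Real.Gamma_pos_of_pos (by linarith)) (Real.Gamma_pos_of_pos (by linarith))
  have hpk : ∀ n, pk m δ (m + n) = (g 0)⁻¹ * (g n - g (n + 1)) := by
    intro n
    rw [pk_eq_mul_sub hm hδ (Nat.le_add_right m n)]
    simp only [g]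
    push_cast
    field_simp
    ring_nf
  have hg : Antitone g := antitone_nat_of_succ_le fun n => sub_nonneg.1 <|
    (pos_of_mul_pos_right (hpk n ▸ pk_pos hm hδ (Nat.le_add_right m n))
      (inv_nonneg.2 (hg_pos 0).le)).le
  have hlim : Tendsto g atTop (𝓝 0) :=
    (Real.tendsto_Gamma_div_Gamma_add_atTop hs).comp <| tendsto_atTop_add_const_right _ δ <|
      tendsto_natCast_atTop_atTop.comp ((tendsto_add_atTop_nat m).congr fun n => Nat.add_comm n m)
  simpa [hpk, (hg_pos 0).ne'] using (hasSum_sub_succ_of_antitone hg hlim).mul_left (g 0)⁻¹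

end
end

section
/- Fix an integer m ≥ 1 and a real δ > −m, and let c(δ) := (2 + δ/m)·Γ(m+2+δ+δ/m)/Γ(m+δ), so that p_d = c(δ)·Γ(d+δ)/Γ(d+3+δ+δ/m) for d ≥ m. Then for every integer r > m: Σ_{d=m}^{r−1} p_d·b_d^{(r)} = c(δ)·(−1)^r·Γ(r+δ)/(r+2+δ+δ/m) · [ (−1)^m / ((r−m)!·Γ(m+2+δ+δ/m)) + (−1)^{r−1} / Γ(r+2+δ+δ/m) ]. -/
/-!
With `a = 2 + δ + δ/m`, the term `p_d b_d^{(r)}` is a multiple, independent of `d`, of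
`(-1)^d / ((r-d)! Γ(d+a+1))`, and `Γ(d+a+1) = (d+a) Γ(d+a)` exhibits this as a difference
`g (d+1) - g d` of consecutive values of `g d = (-1)^d / ((r-d)! Γ(d+a))`. The sum telescopes.
-/

open MeasureTheory Filter Finset

noncomputable section

open Real Nat

def gammaTelescope (a : ℝ) (r d : ℕ) : ℝ :=
  (-1) ^ d / ((r - d)! * Gamma (d + a))

section GammaTelescope

variable {a : ℝ} {r d : ℕ}

lemma gammaTelescope_self : gammaTelescope a r r = (-1) ^ r / Gamma (r + a) := by
  simp [gammaTelescope]

lemma gammaTelescope_succ_sub (hdr : d < r) (ha : 0 < d + a) :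
    gammaTelescope a r (d + 1) - gammaTelescope a r d =
      (-1) ^ (d + 1) * (r + a) / ((r - d)! * Gamma (d + a + 1)) := by
  have hΓ : Gamma (d + a + 1) = (d + a) * Gamma (d + a) := Gamma_add_one ha.ne'
  have hΓpos : 0 < Gamma (d + a) := Gamma_pos_of_pos ha
  have hfac : ((r - d)! : ℝ) = (r - d : ℝ) * (r - (d + 1))! := by
    rw [show r - d = r - (d + 1) + 1 by omega, factorial_succ]
    push_cast [show d + 1 ≤ r from hdr]
    ring
  have hrd : (0 : ℝ) < r - d := by
    have : (d : ℝ) < r := by exact_mod_cast hdr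
    linarith
  unfold gammaTelescope
  rw [hfac, show ((d + 1 : ℕ) : ℝ) + a = d + a + 1 by push_cast; ring, hΓ]
  field_simp
  ring

end GammaTelescope

lemma neg_one_le_div_natCast {m : ℕ} {δ : ℝ} (hδ : -(m : ℝ) < δ) : -1 ≤ δ / m := by
  rcases m.eq_zero_or_pos with rfl | hm
  · simp
  · rw [le_div_iff₀ (by exact_mod_cast hm)]
    linarith

lemma pk_mul_bcoef {m r d : ℕ} {δ : ℝ} (hδ : -(m : ℝ) < δ) (hmd : m ≤ d) (hdr : d < r) :
    pk m δ d * bcoef δ d r =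
      ((2 + δ / m) * Gamma (m + 2 + δ + δ / m) / Gamma (m + δ)) *
        ((-1) ^ (r + 1) * Gamma (r + δ) / (r + 2 + δ + δ / m)) *
        (gammaTelescope (2 + δ + δ / m) r (d + 1) - gammaTelescope (2 + δ + δ / m) r d) := by
  have hδm := neg_one_le_div_natCast hδ
  have hmd' : (m : ℝ) ≤ d := by exact_mod_cast hmd
  have hdr' : (d : ℝ) < r := by exact_mod_cast hdr
  have ha : 0 < d + (2 + δ + δ / m) := by linarith
  rw [gammaTelescope_succ_sub hdr ha, pk, bcoef, if_pos hdr.le]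
  have hΓd : 0 < Gamma (d + δ) := Gamma_pos_of_pos (by linarith)
  have hΓm : 0 < Gamma (m + δ) := Gamma_pos_of_pos (by linarith)
  have hr2 : (0 : ℝ) < r + 2 + δ + δ / m := by linarith
  have hsign : (-1 : ℝ) ^ (r - d) = (-1) ^ (r + 1) * (-1) ^ (d + 1) := by
    rw [← pow_add, show r + 1 + (d + 1) = r - d + 2 * (d + 1) by omega, pow_add, pow_mul]
    norm_num
  rw [show (d : ℝ) + 3 + δ + δ / m = d + (2 + δ + δ / m) + 1 by ring, hsign]
  field_simp
  ring

theorem sum_pk_bcoef_general (m : ℕ) (δ : ℝ) (hδ : -(m:ℝ) < δ)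
    (r : ℕ) (hr : m < r) :
    ∑ d ∈ Finset.Ico m r, pk m δ d * bcoef δ d r =
      ((2 + δ/m) * Real.Gamma ((m:ℝ)+2+δ+δ/m) / Real.Gamma ((m:ℝ)+δ)) *
        ((-1:ℝ)^r * Real.Gamma ((r:ℝ)+δ) / ((r:ℝ)+2+δ+δ/m)) *
        ((-1:ℝ)^m / ((Nat.factorial (r-m) : ℝ) * Real.Gamma ((m:ℝ)+2+δ+δ/m))
          + (-1:ℝ)^(r-1) / Real.Gamma ((r:ℝ)+2+δ+δ/m)) := by
  rw [sum_congr rfl fun d hd => pk_mul_bcoef hδ (mem_Ico.1 hd).1 (mem_Ico.1 hd).2, ← mul_sum,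
    sum_Ico_sub _ hr.le, gammaTelescope_self, gammaTelescope]
  obtain ⟨s, rfl⟩ : ∃ s, r = s + 1 := ⟨r - 1, by omega⟩
  simp only [add_tsub_cancel_right, pow_succ]
  ring_nf

/-- The telescoping evaluation of `∑_{d=m}^{r-1} p_d b_d^{(r)}`, with
`c(δ) = (2+δ/m) Γ(m+2+δ+δ/m)/Γ(m+δ)`. -/
theorem sum_pk_bcoef (m : ℕ) (hm : 1 ≤ m) (δ : ℝ) (hδ : -(m:ℝ) < δ)
    (r : ℕ) (hr : m < r) :
    ∑ d ∈ Finset.Ico m r, pk m δ d * bcoef δ d r =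
      ((2 + δ/m) * Real.Gamma ((m:ℝ)+2+δ+δ/m) / Real.Gamma ((m:ℝ)+δ)) *
        ((-1:ℝ)^r * Real.Gamma ((r:ℝ)+δ) / ((r:ℝ)+2+δ+δ/m)) *
        ((-1:ℝ)^m / ((Nat.factorial (r-m) : ℝ) * Real.Gamma ((m:ℝ)+2+δ+δ/m))
          + (-1:ℝ)^(r-1) / Real.Gamma ((r:ℝ)+2+δ+δ/m)) :=
  sum_pk_bcoef_general m δ hδ r hr
end
end

section
/- Fix an integer m ≥ 1 and a real δ > −m. Then for every integer r ≥ m: b_m^{(r)} − ((r+δ)/(2m+δ))·Σ_{d=m}^{r} b_d^{(r)}·p_d = (−1)^{r−m}·(Γ(r+δ)/((r−m)!·Γ(m+δ)))·(r+2+δ−r/m)/(r+2+δ+δ/m). -/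
/-! After cancelling `Γ(d+δ)`, `b_d^{(r)} p_d` is a constant multiple of
`(-1)^{r-d} / ((r-d)! Γ(d+3+δ+δ/m))`, and the alternating sums
`∑_{j ≤ n} (-1)^j / (j! Γ(x-j))` telescope to `(-1)^n / ((x-1) n! Γ(x-1-n))`.
Hence `∑_d b_d^{(r)} p_d = b_m^{(r)} (2+δ/m)/(r+2+δ+δ/m)`, and since `(2+δ/m)/(2m+δ) = 1/m`
the closed form is a rational identity in `b_m^{(r)}`. -/

open MeasureTheory Filter Finset

noncomputable section

open Nat Real

theorem sum_range_neg_one_pow_div_factorial_mul_Gamma (x : ℝ) (n : ℕ) (hx : (n : ℝ) + 1 < x) :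
    ∑ j ∈ range (n + 1), (-1 : ℝ) ^ j / (j ! * Gamma (x - j)) =
      (-1) ^ n / ((x - 1) * n ! * Gamma (x - 1 - n)) := by
  induction n with
  | zero =>
    have hx1 : x - 1 ≠ 0 := by push_cast at hx; linarith
    have hG : Gamma x = (x - 1) * Gamma (x - 1) := by
      rw [← Gamma_add_one hx1, sub_add_cancel]
    simp [hG]
  | succ n ih =>
    push_cast at hx ⊢
    have hx1 : x - 1 ≠ 0 := by linarith
    have hpos : 0 < x - 1 - (n + 1) := by linarith
    have hG : Gamma (x - 1 - n) = (x - 1 - (n + 1)) * Gamma (x - 1 - (n + 1)) := by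
      rw [← Gamma_add_one hpos.ne']; congr 1; ring
    rw [sum_range_succ, ih (by linarith), factorial_succ]
    push_cast
    rw [show x - (n + 1) = x - 1 - n by ring, hG]
    field_simp [(Gamma_pos_of_pos hpos).ne', hpos.ne']
    ring

theorem sum_Icc_neg_one_pow_div_factorial_mul_Gamma (c : ℝ) {m r : ℕ} (hmr : m ≤ r)
    (hc : 1 < m + c) :
    ∑ d ∈ Icc m r, (-1 : ℝ) ^ (r - d) / ((r - d) ! * Gamma (d + c)) =
      (-1) ^ (r - m) / ((r + c - 1) * (r - m) ! * Gamma (m + c - 1)) := by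
  have hreflect : ∀ d ∈ Icc m r, (-1 : ℝ) ^ (r - d) / ((r - d) ! * Gamma (d + c)) =
      (-1 : ℝ) ^ (r - d) / ((r - d) ! * Gamma (r + c - (r - d : ℕ))) := by
    intro d hd
    rw [Nat.cast_sub (mem_Icc.mp hd).2, add_sub_sub_cancel, add_comm]
  rw [sum_congr rfl hreflect, ← Ico_add_one_right_eq_Icc,
    sum_Ico_reflect (fun j => (-1 : ℝ) ^ j / (j ! * Gamma (r + c - j))) m (by omega),
    Nat.sub_self, ← range_eq_Ico, show r + 1 - m = r - m + 1 by omega,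
    sum_range_neg_one_pow_div_factorial_mul_Gamma _ _ (by push_cast [Nat.cast_sub hmr]; linarith),
    Nat.cast_sub hmr, show (r : ℝ) + c - 1 - (r - m) = m + c - 1 by ring]

theorem bcoef_mul_pk (m : ℕ) (δ : ℝ) {d r : ℕ} (hdr : d ≤ r) (hd : Gamma (d + δ) ≠ 0) :
    bcoef δ d r * pk m δ d = (2 + δ / m) * Gamma (m + 2 + δ + δ / m) / Gamma (m + δ) *
      Gamma (r + δ) * ((-1) ^ (r - d) / ((r - d) ! * Gamma (d + 3 + δ + δ / m))) := by
  rw [bcoef, if_pos hdr, pk]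
  field_simp

theorem sum_Icc_bcoef_mul_pk {m : ℕ} {δ : ℝ} (hδ : 0 < m + δ) {r : ℕ} (hr : m ≤ r) :
    ∑ d ∈ Icc m r, bcoef δ d r * pk m δ d = bcoef δ m r * ((2 + δ / m) / (r + 2 + δ + δ / m)) := by
  have hδm : 0 < (m : ℝ) + 2 + δ + δ / m := by
    rcases m.eq_zero_or_pos with rfl | hm
    · simp only [CharP.cast_eq_zero, div_zero] at hδ ⊢; linarith
    · have : -1 < δ / m := by rw [lt_div_iff₀ (by exact_mod_cast hm)]; linarith
      linarith
  have hterm : ∀ d ∈ Icc m r, bcoef δ d r * pk m δ d =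
      (2 + δ / m) * Gamma (m + 2 + δ + δ / m) / Gamma (m + δ) * Gamma (r + δ) *
        ((-1) ^ (r - d) / ((r - d) ! * Gamma (d + (3 + δ + δ / m)))) := fun d hd => by
    have : (m : ℝ) ≤ d := by exact_mod_cast (mem_Icc.mp hd).1
    simpa only [add_assoc] using bcoef_mul_pk m δ (mem_Icc.mp hd).2 (Gamma_pos_of_pos (by linarith)).ne'
  rw [sum_congr rfl hterm, ← mul_sum, sum_Icc_neg_one_pow_div_factorial_mul_Gamma _ hr (by linarith),
    bcoef, if_pos hr, show (m : ℝ) + (3 + δ + δ / m) - 1 = m + 2 + δ + δ / m by ring]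
  field_simp [(Gamma_pos_of_pos hδm).ne']
  ring

/-- Closed form for `b_m^{(r)} - ((r+δ)/(2m+δ)) ∑_{d=m}^{r} b_d^{(r)} p_d`. -/
theorem bcoef_minus_weighted_sum (m : ℕ) (hm : 1 ≤ m) (δ : ℝ) (hδ : -(m:ℝ) < δ)
    (r : ℕ) (hr : m ≤ r) :
    bcoef δ m r - (((r:ℝ)+δ)/(2*(m:ℝ)+δ)) * ∑ d ∈ Finset.Icc m r, bcoef δ d r * pk m δ d =
      (-1:ℝ)^(r-m) * (Real.Gamma ((r:ℝ)+δ) /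
          ((Nat.factorial (r-m) : ℝ) * Real.Gamma ((m:ℝ)+δ))) *
        (((r:ℝ)+2+δ-(r:ℝ)/m) / ((r:ℝ)+2+δ+δ/m)) := by
  have hm0 : (0 : ℝ) < m := by exact_mod_cast hm
  have hmr : (m : ℝ) ≤ r := by exact_mod_cast hr
  have hb : bcoef δ m r = (-1) ^ (r - m) * (Gamma (r + δ) / ((r - m) ! * Gamma (m + δ))) := by
    rw [bcoef, if_pos hr, mul_div_assoc]
  have hmδ : 0 < (m : ℝ) + δ := by linarith
  have h2mδ : 2 * (m : ℝ) + δ ≠ 0 := by linarith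
  -- `field_simp` rewrites `2 + δ / m` as `(m * 2 + δ) / m`
  have h2mδ' : (m : ℝ) * 2 + δ ≠ 0 := by linarith
  -- `m (r + 2 + δ) + δ = m (r - m) + (m + 1)(m + δ) + m`
  have hX : (m : ℝ) * (r + 2 + δ) + δ ≠ 0 := by
    nlinarith [mul_nonneg hm0.le (sub_nonneg.2 hmr), mul_pos (add_pos hm0 one_pos) hmδ]
  rw [sum_Icc_bcoef_mul_pk hmδ hr, ← hb]
  field_simp
  ring

end
end
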